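/- Fix an integer g ≥ 1, let C_{−1} be a real number, and let λ_1 < λ_2 < ⋯ < λ_g be real numbers with 0 < λ_1 and 2·(λ_1 + ⋯ + λ_g) < C_{−1}. Define p_i = C_{−1} − 2·Σ_{j=1}^{g} min(λ_i, λ_j) for i = 1,…,g, and define the g×g real matrices Λ and A by Λ_{ij} = C_{−1} + p_i·δ_{ij} + 2·min(λ_i, λ_j) and A_{ij} = Λ_{ij} − C_{−1} = p_i·δ_{ij} + 2·min(λ_i, λ_j). Then det Λ = (g+1)·det A = (g+1)·p_1·p_2·⋯·p_{g−1}·C_{−1} (the product p_1⋯p_{g−1} being empty, equal to 1, when g = 1). -/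

import Mathlib

/-!
Every row of `Λ` sums to `(g + 1) C₋₁` and every row of `A` to `C₋₁`, because `p_i` is exactly
`C₋₁` minus the off-diagonal `min`-part of row `i`. Since `λ` is increasing, below the diagonal
the entry `min(λ_i, λ_j) = λ_j` depends only on the column, so subtracting the last row from the
others and then adding all columns into the last one leaves a block-triangular matrix whose
determinant is the common row sum times `p_1 ⋯ p_{g-1}`.
-/

open Matrix Finset

@[to_additive sum_Icc_one_eq_sum_fin]
theorem Finset.prod_Icc_one_eq_prod_fin {M : Type*} [CommMonoid M] (f : ℕ → M) (n : ℕ) :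
    ∏ i ∈ Icc 1 n, f i = ∏ i : Fin n, f (i + 1) := by
  rw [Fin.prod_univ_eq_prod_range (fun i => f (i + 1)), range_eq_Ico, prod_Ico_add',
    zero_add, Ico_add_one_right_eq_Icc]

namespace Matrix

variable {R : Type*} [CommRing R] {n : ℕ}

theorem det_eq_mul_det_submatrix_castSucc_of_lastCol (M : Matrix (Fin (n + 1)) (Fin (n + 1)) R)
    (hcol : ∀ i, i ≠ Fin.last n → M i (Fin.last n) = 0) :
    M.det = M (Fin.last n) (Fin.last n) * (M.submatrix Fin.castSucc Fin.castSucc).det := by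
  rw [det_succ_column M (Fin.last n), sum_eq_single (Fin.last n)]
  · simp [← two_mul]
  · intro i _ hi
    simp [hcol i hi]
  · simp

theorem det_eq_rowSum_mul_prod_of_lower_eq_last (M : Matrix (Fin (n + 1)) (Fin (n + 1)) R)
    (d : R) (hrow : ∀ i, ∑ j, M i j = d)
    (hlower : ∀ i j, j < i → M i j = M (Fin.last n) j) :
    M.det = d * ∏ i : Fin n, (M i.castSucc i.castSucc - M (Fin.last n) i.castSucc) := by
  set N : Matrix (Fin (n + 1)) (Fin (n + 1)) R :=
    of fun i j => if i = Fin.last n then M i j else M i j - M (Fin.last n) j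
  have hMN : M.det = N.det := by
    refine det_eq_of_forall_row_eq_smul_add_const (fun i => if i = Fin.last n then 0 else 1)
      (Fin.last n) (by simp) fun i j => ?_
    by_cases hi : i = Fin.last n <;> simp [N, hi]
  have hNrow : ∀ i, ∑ j, N i j = if i = Fin.last n then d else 0 := by
    intro i
    by_cases hi : i = Fin.last n <;> simp [N, hi, sum_sub_distrib, hrow]
  set P := N.updateCol (Fin.last n) fun i => ∑ j, N i j
  have hNP : N.det = P.det := by
    simpa using (det_updateCol_sum N (Fin.last n) fun _ => 1).symm
  have hPtri : (P.submatrix Fin.castSucc Fin.castSucc).IsUpperTriangular := by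
    intro i j hji
    have hj : j.castSucc < i.castSucc := hji
    simp [P, N, (Fin.castSucc_lt_last i).ne, (Fin.castSucc_lt_last j).ne, hlower _ _ hj]
  rw [hMN, hNP, det_eq_mul_det_submatrix_castSucc_of_lastCol P fun i hi => by simp [P, hNrow, hi],
    det_of_isUpperTriangular hPtri]
  simp [P, N, hrow, (Fin.castSucc_lt_last _).ne]

end Matrix

section TropicalPeriodMatrix

variable {R : Type*} [CommRing R] [LinearOrder R] {n : ℕ}

def tropicalPeriodMatrix (c : R) (q f : Fin n → R) : Matrix (Fin n) (Fin n) R :=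
  of fun i j => c + (if i = j then q i else 0) + 2 * min (f i) (f j)

theorem det_tropicalPeriodMatrix (c C : R) (q f : Fin (n + 1) → R) (hf : Monotone f)
    (hq : ∀ i, q i = C - 2 * ∑ j, min (f i) (f j)) :
    (tropicalPeriodMatrix c q f).det = ((n + 1) * c + C) * ∏ i : Fin n, q i.castSucc := by
  have hlast : ∀ j, min (f (Fin.last n)) (f j) = f j := fun j => min_eq_right (hf j.le_last)
  rw [det_eq_rowSum_mul_prod_of_lower_eq_last _ ((n + 1) * c + C)]
  · congr 1
    refine prod_congr rfl fun i _ => ?_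
    simp [tropicalPeriodMatrix, hlast, (Fin.castSucc_lt_last i).ne']
  · intro i
    simp only [tropicalPeriodMatrix, hq, of_apply, sum_add_distrib, sum_const, card_univ,
      Fintype.card_fin, nsmul_eq_mul, Nat.cast_add, Nat.cast_one, sum_ite_eq, mem_univ,
      ↓reduceIte, ← mul_sum]
    ring
  · intro i j hji
    simp [tropicalPeriodMatrix, hji.ne', (hji.trans_le i.le_last).ne', hlast,
      min_eq_right (hf hji.le)]

end TropicalPeriodMatrix

theorem trop_jacobian_det (g : ℕ) (hg : 1 ≤ g) (Cm1 : ℝ) (lam p : ℕ → ℝ)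
    (hmono : ∀ i : ℕ, 1 ≤ i → i < g → lam i < lam (i + 1))
    (hp : ∀ i : ℕ, 1 ≤ i → i ≤ g →
      p i = Cm1 - 2 * ∑ j ∈ Finset.Icc 1 g, min (lam i) (lam j))
    (Lam A : Matrix (Fin g) (Fin g) ℝ)
    (hLam : ∀ i j : Fin g, Lam i j =
      Cm1 + (if i = j then p ((i : ℕ) + 1) else 0)
        + 2 * min (lam ((i : ℕ) + 1)) (lam ((j : ℕ) + 1)))
    (hA : ∀ i j : Fin g, A i j = Lam i j - Cm1) :
    Lam.det = (g + 1) * A.det ∧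
    Lam.det = (g + 1) * (∏ i ∈ Finset.Icc 1 (g - 1), p i) * Cm1 := by
  obtain ⟨m, rfl⟩ : ∃ m, g = m + 1 := ⟨g - 1, by omega⟩
  set f : Fin (m + 1) → ℝ := fun i => lam (i + 1)
  set q : Fin (m + 1) → ℝ := fun i => p (i + 1)
  have hf : Monotone f :=
    (Fin.strictMono_iff_lt_succ.2 fun i => hmono _ (by omega) (by simp)).monotone
  have hq : ∀ i, q i = Cm1 - 2 * ∑ j, min (f i) (f j) := fun i =>
    (hp _ (by omega) (by omega)).trans (by rw [sum_Icc_one_eq_sum_fin])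
  have hLam' : Lam = tropicalPeriodMatrix Cm1 q f := ext hLam
  have hA' : A = tropicalPeriodMatrix 0 q f :=
    ext fun i j => by
      rw [hA, hLam]
      simp only [tropicalPeriodMatrix, of_apply, q, f]
      ring
  rw [hLam', hA', det_tropicalPeriodMatrix _ _ _ _ hf hq, det_tropicalPeriodMatrix _ _ _ _ hf hq,
    Nat.add_sub_cancel, prod_Icc_one_eq_prod_fin]
  push_cast
  constructor <;> simp only [q, Fin.val_castSucc] <;> ring
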